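/- Let G be a finite group, let K be a Carter subgroup of G, and let Y be a subgroup of G containing K such that any two Carter subgroups of Y are conjugate in Y. Then Y is self-normalizing in G, i.e. N_G(Y) = Y. -/

import Mathlib

/-!
A Frattini argument: if `g` normalizes `Y`, then `K^g` is a Carter subgroup of `G` inside `Y`,
hence a Carter subgroup of `Y`, so `K^(yg) = K` for some `y ∈ Y`. Then `yg ∈ N_G(K) = K ≤ Y`,
and therefore `g ∈ Y`.
-/

/-- A Carter subgroup of a group `G` is a nilpotent self-normalizing subgroup. -/
def IsCarterSubgroup {G : Type*} [Group G] (K : Subgroup G) : Prop :=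
  Group.IsNilpotent K ∧ Subgroup.normalizer (K : Set G) = K

namespace Subgroup

variable {G : Type*} [Group G]

theorem map_conj_mul (H : Subgroup G) (a b : G) :
    H.map (MulAut.conj (a * b)).toMonoidHom =
      (H.map (MulAut.conj b).toMonoidHom).map (MulAut.conj a).toMonoidHom := by
  rw [map_map]
  congr 1
  ext x
  simp [mul_assoc]

theorem map_conj_eq_of_map_conj_subgroupOf_eq {H₁ H₂ Y : Subgroup G} (h₁ : H₁ ≤ Y) (h₂ : H₂ ≤ Y)
    {y : Y} (h : (H₁.subgroupOf Y).map (MulAut.conj y).toMonoidHom = H₂.subgroupOf Y) :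
    H₁.map (MulAut.conj (y : G)).toMonoidHom = H₂ := by
  have hsubtype : Y.subtype.comp (MulAut.conj y).toMonoidHom =
      (MulAut.conj (y : G)).toMonoidHom.comp Y.subtype := by
    ext
    simp
  rw [← map_subgroupOf_eq_of_le h₁, ← map_subgroupOf_eq_of_le h₂, ← h, map_map, map_map, hsubtype]

end Subgroup

namespace IsCarterSubgroup

variable {G : Type*} [Group G] {K : Subgroup G}

theorem subgroupOf (hK : IsCarterSubgroup K) {Y : Subgroup G} (hKY : K ≤ Y) :
    IsCarterSubgroup (K.subgroupOf Y) :=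
  have := hK.1
  ⟨Group.nilpotent_of_mulEquiv (Subgroup.subgroupOfEquivOfLe hKY).symm,
    by rw [← Subgroup.subgroupOf_normalizer_eq hKY, hK.2]⟩

theorem map_equiv (hK : IsCarterSubgroup K) {N : Type*} [Group N] (e : G ≃* N) :
    IsCarterSubgroup (K.map e.toMonoidHom) :=
  have := hK.1
  ⟨Group.nilpotent_of_mulEquiv (e.subgroupMap K), by rw [← Subgroup.map_equiv_normalizer_eq, hK.2]⟩

end IsCarterSubgroup

theorem self_normalizing_of_contains_carter_general {G : Type*} [Group G]
    (K Y : Subgroup G) (hK : IsCarterSubgroup K) (hKY : K ≤ Y)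
    (hconj : ∀ K₁ K₂ : Subgroup ↥Y, IsCarterSubgroup K₁ → IsCarterSubgroup K₂ →
      ∃ g : ↥Y, K₁.map (MulAut.conj g).toMonoidHom = K₂) :
    Subgroup.normalizer (Y : Set G) = Y := by
  refine le_antisymm (fun g hg ↦ ?_) Subgroup.le_normalizer
  have hKgY : K.map (MulAut.conj g).toMonoidHom ≤ Y :=
    (Subgroup.map_mono hKY).trans (Subgroup.mem_normalizer_iff_map_conj_eq.mp hg).le
  obtain ⟨y, hy⟩ := hconj _ _ ((hK.map_equiv (MulAut.conj g)).subgroupOf hKgY) (hK.subgroupOf hKY)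
  have hyg : (y : G) * g ∈ K := by
    rw [← hK.2, Subgroup.mem_normalizer_iff_map_conj_eq]
    exact (K.map_conj_mul _ _).trans (Subgroup.map_conj_eq_of_map_conj_subgroupOf_eq hKgY hKY hy)
  simpa using Y.mul_mem (Y.inv_mem y.2) (hKY hyg)

/-- A subgroup containing a Carter subgroup of `G`, whose own Carter subgroups are
conjugate, is self-normalizing in `G`. -/
theorem self_normalizing_of_contains_carter {G : Type*} [Group G] [Finite G]
    (K Y : Subgroup G) (hK : IsCarterSubgroup K) (hKY : K ≤ Y)
    (hconj : ∀ K₁ K₂ : Subgroup ↥Y, IsCarterSubgroup K₁ → IsCarterSubgroup K₂ →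
      ∃ g : ↥Y, K₁.map (MulAut.conj g).toMonoidHom = K₂) :
    Subgroup.normalizer (Y : Set G) = Y :=
  self_normalizing_of_contains_carter_general K Y hK hKY hconj
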